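/- Let W be an isotropic fractional Brownian field with Hurst parameter H = α/2, α ∈ (0,1), and let ε ∈ (0,1/2). There exist constants c > 0 and d₀ > 0 such that for all x₁,x₂,x₃,x₄ ∈ ℝ² with 0 < ‖x₄−x₃‖ ≤ ‖x₂−x₁‖ ≤ ‖x₃−x₁‖^ε and ‖x₃−x₁‖ ≥ d₀, one has |corr(U_{x₁,x₂}, U_{x₃,x₄})| ≤ c·‖x₂−x₁‖^{2−α}·‖x₃−x₁‖^{α−2}. -/

import Mathlib

open MeasureTheory ProbabilityTheory Real

open scoped RealInnerProductSpace

noncomputable section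

abbrev E2 : Type := EuclideanSpace ℝ (Fin 2)

/-- Normalized increment of a field `W` between `x` and `y` (Hurst parameter `α/2`). -/
def nInc {Ω : Type*} (σ α : ℝ) (W : E2 → Ω → ℝ) (x y : E2) (ω : Ω) : ℝ :=
  σ⁻¹ * ‖y - x‖ ^ (-(α/2)) * (W y ω - W x ω)

section Aux

/-- product of two L² functions is integrable -/
lemma memL2_mul_integrable {Ω : Type*} [MeasurableSpace Ω] {μ : Measure Ω} {f g : Ω → ℝ}
    (hf : MemLp f 2 μ) (hg : MemLp g 2 μ) : Integrable (fun ω => f ω * g ω) μ := by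
  have h : MemLp (g • f) 1 μ := hf.smul hg (hpqr := ⟨by simp [ENNReal.inv_two_add_inv_two]⟩)
  have h2 : (fun ω => f ω * g ω) = g • f := by
    funext ω; simp [mul_comm]
  rw [h2]
  exact memLp_one_iff_integrable.mp h

/-- 1D mean value bound for `t ^ γ`, `γ < 0`. -/
lemma rpow_diff_le {γ b a : ℝ} (hγ : γ < 0) (hb : 0 < b) (hba : b ≤ a) :
    b ^ γ - a ^ γ ≤ (-γ) * b ^ (γ - 1) * (a - b) := by
  have hderiv : ∀ t ∈ Set.Icc b a, HasDerivWithinAt (fun t : ℝ => t ^ γ)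
      (γ * t ^ (γ - 1)) (Set.Icc b a) t := by
    intro t ht
    exact (Real.hasDerivAt_rpow_const (Or.inl (ne_of_gt (lt_of_lt_of_le hb ht.1)))).hasDerivWithinAt
  have hbound : ∀ t ∈ Set.Ico b a, ‖γ * t ^ (γ - 1)‖ ≤ (-γ) * b ^ (γ - 1) := by
    intro t ht
    have ht0 : 0 < t := lt_of_lt_of_le hb ht.1
    have h1 : t ^ (γ - 1) ≤ b ^ (γ - 1) :=
      Real.rpow_le_rpow_of_nonpos hb ht.1 (by linarith)
    have h2 : (0:ℝ) ≤ t ^ (γ - 1) := (Real.rpow_pos_of_pos ht0 _).le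
    rw [Real.norm_eq_abs, abs_mul, abs_of_neg hγ, abs_of_nonneg h2]
    exact mul_le_mul_of_nonneg_left h1 (by linarith)
  have key := norm_image_sub_le_of_norm_deriv_le_segment' hderiv hbound a
    (Set.right_mem_Icc.2 hba)
  rw [Real.norm_eq_abs] at key
  have := abs_le.1 key
  linarith [this.1]

/-- Lipschitz-type bound for the gradient field `x ↦ ‖x‖^(α-2) • x` away from 0,
    in the case `‖b‖ ≤ ‖a‖`. -/
lemma grad_diff_bound_aux {α : ℝ} (hα0 : 0 < α) (hα1 : α < 1) {m : ℝ} (hm : 0 < m)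
    {a b : E2} (ha : m ≤ ‖a‖) (hb : m ≤ ‖b‖) (hba : ‖b‖ ≤ ‖a‖) :
    ‖‖a‖ ^ (α - 2) • a - ‖b‖ ^ (α - 2) • b‖ ≤ 3 * m ^ (α - 2) * ‖a - b‖ := by
  have hb0 : (0:ℝ) < ‖b‖ := lt_of_lt_of_le hm hb
  have ha0 : (0:ℝ) < ‖a‖ := lt_of_lt_of_le hm ha
  have key : ‖a‖ ^ (α - 2) • a - ‖b‖ ^ (α - 2) • b
      = ‖a‖ ^ (α - 2) • (a - b) + (‖a‖ ^ (α - 2) - ‖b‖ ^ (α - 2)) • b := by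
    rw [smul_sub, sub_smul]; abel
  rw [key]
  have hM : (0:ℝ) < m ^ (α - 2) := Real.rpow_pos_of_pos hm _
  have h1 : ‖a‖ ^ (α - 2) ≤ m ^ (α - 2) :=
    Real.rpow_le_rpow_of_nonpos hm ha (by linarith)
  have hd : ‖a‖ ^ (α - 2) ≤ ‖b‖ ^ (α - 2) :=
    Real.rpow_le_rpow_of_nonpos hb0 hba (by linarith)
  have hdiff : ‖b‖ ^ (α - 2) - ‖a‖ ^ (α - 2) ≤ (2 - α) * ‖b‖ ^ (α - 3) * (‖a‖ - ‖b‖) := by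
    have := rpow_diff_le (γ := α - 2) (b := ‖b‖) (a := ‖a‖) (by linarith) hb0 hba
    have e1 : -(α - 2) = 2 - α := by ring
    have e2 : α - 2 - 1 = α - 3 := by ring
    rw [e1, e2] at this
    exact this
  have hnormsub : ‖a‖ - ‖b‖ ≤ ‖a - b‖ := by
    have := norm_sub_norm_le a b
    linarith [le_abs_self (‖a‖ - ‖b‖)]
  have hAB : (0:ℝ) ≤ ‖a‖ - ‖b‖ := by linarith
  calc ‖‖a‖ ^ (α - 2) • (a - b) + (‖a‖ ^ (α - 2) - ‖b‖ ^ (α - 2)) • b‖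
      ≤ ‖‖a‖ ^ (α - 2) • (a - b)‖ + ‖(‖a‖ ^ (α - 2) - ‖b‖ ^ (α - 2)) • b‖ := norm_add_le _ _
    _ = ‖a‖ ^ (α - 2) * ‖a - b‖ + (‖b‖ ^ (α - 2) - ‖a‖ ^ (α - 2)) * ‖b‖ := by
        rw [norm_smul, norm_smul, Real.norm_eq_abs, Real.norm_eq_abs,
          abs_of_nonneg (Real.rpow_pos_of_pos ha0 _).le,
          abs_of_nonpos (by linarith : ‖a‖ ^ (α - 2) - ‖b‖ ^ (α - 2) ≤ 0)]
        ring
    _ ≤ m ^ (α - 2) * ‖a - b‖ + ((2 - α) * ‖b‖ ^ (α - 3) * (‖a‖ - ‖b‖)) * ‖b‖ := by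
        gcongr
    _ = (2 - α) * (‖b‖ ^ (α - 3) * ‖b‖) * (‖a‖ - ‖b‖) + m ^ (α - 2) * ‖a - b‖ := by ring
    _ = (2 - α) * ‖b‖ ^ (α - 2) * (‖a‖ - ‖b‖) + m ^ (α - 2) * ‖a - b‖ := by
        have hbb : ‖b‖ ^ (α - 3) * ‖b‖ = ‖b‖ ^ (α - 2) := by
          rw [show (α - 2) = (α - 3) + 1 by ring, Real.rpow_add_one (ne_of_gt hb0)]
        rw [hbb]
    _ ≤ (2 - α) * (m ^ (α - 2)) * ‖a - b‖ + m ^ (α - 2) * ‖a - b‖ := by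
        have hbm : ‖b‖ ^ (α - 2) ≤ m ^ (α - 2) :=
          Real.rpow_le_rpow_of_nonpos hm hb (by linarith)
        have h3 : (2 - α) * ‖b‖ ^ (α - 2) * (‖a‖ - ‖b‖) ≤ (2 - α) * (m ^ (α - 2)) * ‖a - b‖ := by
          calc (2 - α) * ‖b‖ ^ (α - 2) * (‖a‖ - ‖b‖)
              ≤ (2 - α) * (m ^ (α - 2)) * (‖a‖ - ‖b‖) := by gcongr; linarith
            _ ≤ (2 - α) * (m ^ (α - 2)) * ‖a - b‖ :=
                mul_le_mul_of_nonneg_left hnormsub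
                  (mul_nonneg (by linarith) hM.le)
        linarith
    _ ≤ 3 * m ^ (α - 2) * ‖a - b‖ := by
        nlinarith [mul_nonneg hM.le (norm_nonneg (a - b)), norm_nonneg (a - b)]

lemma grad_diff_bound {α : ℝ} (hα0 : 0 < α) (hα1 : α < 1) {m : ℝ} (hm : 0 < m)
    {a b : E2} (ha : m ≤ ‖a‖) (hb : m ≤ ‖b‖) :
    ‖‖a‖ ^ (α - 2) • a - ‖b‖ ^ (α - 2) • b‖ ≤ 3 * m ^ (α - 2) * ‖a - b‖ := by
  rcases le_total ‖b‖ ‖a‖ with h | h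
  · exact grad_diff_bound_aux hα0 hα1 hm ha hb h
  · have := grad_diff_bound_aux hα0 hα1 hm hb ha h
    rwa [norm_sub_rev, norm_sub_rev b a] at this

lemma sq_rpow_half (w : E2) {p : ℝ} : ((‖w‖ : ℝ) ^ (2:ℕ)) ^ (p / 2) = ‖w‖ ^ p := by
  rw [← Real.rpow_natCast ‖w‖ 2, ← Real.rpow_mul (norm_nonneg w)]
  congr 1
  push_cast
  ring

/-- Derivative of `t ↦ ‖v + t • k‖ ^ α` along a line, away from 0. -/
lemma hasDeriv_line {α : ℝ} (v k : E2) (t : ℝ) (hv : v + t • k ≠ 0) :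
    HasDerivAt (fun s : ℝ => ‖v + s • k‖ ^ α)
      (α * ‖v + t • k‖ ^ (α - 2) * ⟪v + t • k, k⟫) t := by
  set q : ℝ → ℝ := fun s => ‖v‖ ^ 2 + (2 * ⟪v, k⟫) * s + ‖k‖ ^ 2 * s ^ 2 with hq
  have hqval : ∀ s : ℝ, q s = ‖v + s • k‖ ^ 2 := by
    intro s
    rw [norm_add_sq_real, real_inner_smul_right, norm_smul, Real.norm_eq_abs, mul_pow, sq_abs]
    ring
  have hq' : HasDerivAt q (2 * ⟪v, k⟫ + ‖k‖ ^ 2 * (2 * t)) t := by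
    have h1 : HasDerivAt (fun s : ℝ => (2 * ⟪v, k⟫) * s) (2 * ⟪v, k⟫) t := by
      simpa using (hasDerivAt_id t).const_mul (2 * ⟪v, k⟫)
    have h2 : HasDerivAt (fun s : ℝ => ‖k‖ ^ 2 * s ^ 2) (‖k‖ ^ 2 * (2 * t)) t := by
      have := (hasDerivAt_pow 2 t).const_mul (‖k‖ ^ 2)
      simpa using this
    have := ((hasDerivAt_const t (‖v‖ ^ 2)).add h1).add h2
    rw [zero_add] at this
    exact this
  have hqt : q t ≠ 0 := by
    rw [hqval t]
    exact pow_ne_zero _ (norm_ne_zero_iff.mpr hv)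
  have hmain := hq'.rpow_const (p := α / 2) (Or.inl hqt)
  have hfun : (fun s : ℝ => q s ^ (α / 2)) = fun s : ℝ => ‖v + s • k‖ ^ α := by
    funext s
    rw [hqval s, sq_rpow_half]
  rw [hfun] at hmain
  convert hmain using 1
  have hqt2 : q t ^ (α / 2 - 1) = ‖v + t • k‖ ^ (α - 2) := by
    rw [hqval t]
    have h5 : α / 2 - 1 = (α - 2) / 2 := by ring
    rw [h5, sq_rpow_half]
  rw [hqt2]
  have hinner : ⟪v + t • k, k⟫ = ⟪v, k⟫ + t * ‖k‖ ^ 2 := by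
    rw [inner_add_left, real_inner_smul_left, real_inner_self_eq_norm_sq]
  rw [hinner]
  ring

/-- Second-difference bound for `‖·‖ ^ α`. -/
lemma bracket_bound {α : ℝ} (hα0 : 0 < α) (hα1 : α < 1) {m : ℝ} (hm : 0 < m)
    (u h k : E2)
    (h1 : ∀ t ∈ Set.Icc (0:ℝ) 1, m ≤ ‖u - h + t • k‖)
    (h2 : ∀ t ∈ Set.Icc (0:ℝ) 1, m ≤ ‖u + t • k‖) :
    |‖u - h‖ ^ α + ‖u + k‖ ^ α - ‖u - h + k‖ ^ α - ‖u‖ ^ α|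
      ≤ 3 * m ^ (α - 2) * ‖h‖ * ‖k‖ := by
  set ψ : ℝ → ℝ := fun t => ‖u - h + t • k‖ ^ α - ‖u + t • k‖ ^ α with hψ
  set ψ' : ℝ → ℝ := fun t =>
    α * ‖u - h + t • k‖ ^ (α - 2) * ⟪u - h + t • k, k⟫
      - α * ‖u + t • k‖ ^ (α - 2) * ⟪u + t • k, k⟫ with hψ'
  have hderiv : ∀ t ∈ Set.Icc (0:ℝ) 1,
      HasDerivWithinAt ψ (ψ' t) (Set.Icc (0:ℝ) 1) t := by
    intro t ht
    have n1 : u - h + t • k ≠ 0 := by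
      intro hzero
      have := h1 t ht
      rw [hzero, norm_zero] at this
      linarith
    have n2 : u + t • k ≠ 0 := by
      intro hzero
      have := h2 t ht
      rw [hzero, norm_zero] at this
      linarith
    exact ((hasDeriv_line (u - h) k t n1).sub (hasDeriv_line u k t n2)).hasDerivWithinAt
  have hbound : ∀ t ∈ Set.Ico (0:ℝ) 1, ‖ψ' t‖ ≤ 3 * m ^ (α - 2) * ‖h‖ * ‖k‖ := by
    intro t ht
    have ht' : t ∈ Set.Icc (0:ℝ) 1 := ⟨ht.1, ht.2.le⟩
    have hab : (u - h + t • k) - (u + t • k) = -h := by abel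
    have hsplit : ψ' t = α * ⟪‖u - h + t • k‖ ^ (α - 2) • (u - h + t • k)
        - ‖u + t • k‖ ^ (α - 2) • (u + t • k), k⟫ := by
      simp only [hψ']
      rw [inner_sub_left, real_inner_smul_left, real_inner_smul_left]
      ring
    rw [hsplit, Real.norm_eq_abs, abs_mul]
    have hgrad := grad_diff_bound hα0 hα1 hm (h1 t ht') (h2 t ht')
    rw [hab, norm_neg] at hgrad
    have hin := abs_real_inner_le_norm (‖u - h + t • k‖ ^ (α - 2) • (u - h + t • k)
        - ‖u + t • k‖ ^ (α - 2) • (u + t • k)) k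
    have hα_abs : |α| ≤ 1 := by
      rw [abs_of_nonneg hα0.le]; linarith
    calc |α| * |⟪‖u - h + t • k‖ ^ (α - 2) • (u - h + t • k)
          - ‖u + t • k‖ ^ (α - 2) • (u + t • k), k⟫|
        ≤ 1 * (‖‖u - h + t • k‖ ^ (α - 2) • (u - h + t • k)
            - ‖u + t • k‖ ^ (α - 2) • (u + t • k)‖ * ‖k‖) :=
          mul_le_mul hα_abs hin (abs_nonneg _) zero_le_one
      _ ≤ 1 * ((3 * m ^ (α - 2) * ‖h‖) * ‖k‖) := by
          gcongr
      _ = 3 * m ^ (α - 2) * ‖h‖ * ‖k‖ := by ring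
  have key := norm_image_sub_le_of_norm_deriv_le_segment_01' hderiv hbound
  have hval : ψ 1 - ψ 0 = -(‖u - h‖ ^ α + ‖u + k‖ ^ α - ‖u - h + k‖ ^ α - ‖u‖ ^ α) := by
    simp only [hψ, one_smul, zero_smul, add_zero]
    ring
  rw [Real.norm_eq_abs, hval, abs_neg] at key
  exact key

end Aux

section Cov

variable {Ω : Type*} [MeasurableSpace Ω] {μ : Measure Ω}

lemma cov_incr (W : E2 → Ω → ℝ) (σ α : ℝ)
    (hmem : ∀ x, MemLp (W x) 2 μ)
    (hcov : ∀ x y, ∫ ω, W x ω * W y ω ∂μ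
      = σ ^ 2 / 2 * (‖x‖ ^ α + ‖y‖ ^ α - ‖y - x‖ ^ α))
    (x y z w : E2) :
    ∫ ω, (W y ω - W x ω) * (W w ω - W z ω) ∂μ
      = σ ^ 2 / 2 * (‖w - x‖ ^ α + ‖z - y‖ ^ α - ‖w - y‖ ^ α - ‖z - x‖ ^ α) := by
  have i1 := memL2_mul_integrable (hmem y) (hmem w)
  have i2 := memL2_mul_integrable (hmem y) (hmem z)
  have i3 := memL2_mul_integrable (hmem x) (hmem w)
  have i4 := memL2_mul_integrable (hmem x) (hmem z)
  have expand : (fun ω => (W y ω - W x ω) * (W w ω - W z ω))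
      = fun ω => (W y ω * W w ω - W y ω * W z ω) - (W x ω * W w ω - W x ω * W z ω) := by
    funext ω; ring
  have i12 : Integrable (fun ω => W y ω * W w ω - W y ω * W z ω) μ := i1.sub i2
  have i34 : Integrable (fun ω => W x ω * W w ω - W x ω * W z ω) μ := i3.sub i4
  rw [expand, integral_sub i12 i34, integral_sub i1 i2, integral_sub i3 i4,
    hcov y w, hcov y z, hcov x w, hcov x z]
  ring

lemma var_incr (W : E2 → Ω → ℝ) (σ α : ℝ) (hα0 : α ≠ 0)
    (hmem : ∀ x, MemLp (W x) 2 μ)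
    (hcov : ∀ x y, ∫ ω, W x ω * W y ω ∂μ
      = σ ^ 2 / 2 * (‖x‖ ^ α + ‖y‖ ^ α - ‖y - x‖ ^ α))
    (x y : E2) :
    ∫ ω, (W y ω - W x ω) ^ 2 ∂μ = σ ^ 2 * ‖y - x‖ ^ α := by
  have e : (fun ω => (W y ω - W x ω) ^ 2)
      = fun ω => (W y ω - W x ω) * (W y ω - W x ω) := by funext ω; ring
  rw [e, cov_incr W σ α hmem hcov x y x y]
  simp only [sub_self, norm_zero, Real.zero_rpow hα0]
  rw [norm_sub_rev x y]
  ring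

end Cov

/-- the final algebraic estimate -/
lemma final_algebra {σ α r s D B : ℝ} (hσ : 0 < σ) (hα0 : 0 < α) (hα1 : α < 1)
    (hs : 0 < s) (hsr : s ≤ r) (hD : 0 < D)
    (hB : |B| ≤ 3 * (D/2) ^ (α-2) * r * s) :
    |σ⁻¹ * r ^ (-(α/2)) * (σ⁻¹ * s ^ (-(α/2))) * (σ^2/2 * B)|
      ≤ 6 * r ^ (2-α) * D ^ (α-2) := by
  have hr : 0 < r := lt_of_lt_of_le hs hsr
  have hσc : σ⁻¹ * r ^ (-(α/2)) * (σ⁻¹ * s ^ (-(α/2))) * (σ^2/2 * B)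
      = (σ⁻¹ * σ⁻¹ * σ^2) * (r ^ (-(α/2)) * s ^ (-(α/2)) / 2 * B) := by ring
  have hσ1 : σ⁻¹ * σ⁻¹ * σ^2 = 1 := by
    field_simp
  rw [hσc, hσ1, one_mul]
  have hC0 : (0:ℝ) ≤ r ^ (-(α/2)) * s ^ (-(α/2)) / 2 := by positivity
  rw [abs_mul, abs_of_nonneg hC0]
  have e3 : s ^ (1-α/2) ≤ r ^ (1-α/2) := Real.rpow_le_rpow hs.le hsr (by linarith)
  have e5 : (D/2) ^ (α-2) ≤ 4 * D ^ (α-2) := by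
    rw [Real.div_rpow hD.le (by norm_num : (0:ℝ) ≤ 2), div_eq_mul_inv,
      ← Real.rpow_neg (by norm_num : (0:ℝ) ≤ 2)]
    have h24 : (2:ℝ) ^ (-(α-2)) ≤ 4 := by
      calc (2:ℝ) ^ (-(α-2)) ≤ (2:ℝ) ^ ((2:ℕ):ℝ) :=
            Real.rpow_le_rpow_of_exponent_le one_le_two (by push_cast; linarith)
        _ = 4 := by rw [Real.rpow_natCast]; norm_num
    calc D ^ (α-2) * (2:ℝ) ^ (-(α-2)) ≤ D ^ (α-2) * 4 :=
          mul_le_mul_of_nonneg_left h24 (Real.rpow_pos_of_pos hD _).le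
      _ = 4 * D ^ (α-2) := by ring
  have h1 : (0:ℝ) ≤ r ^ (1-α/2) := (Real.rpow_pos_of_pos hr _).le
  have hx : (0:ℝ) ≤ (D/2) ^ (α-2) := (Real.rpow_pos_of_pos (by linarith) _).le
  calc r ^ (-(α/2)) * s ^ (-(α/2)) / 2 * |B|
      ≤ r ^ (-(α/2)) * s ^ (-(α/2)) / 2 * (3 * (D/2) ^ (α-2) * r * s) :=
        mul_le_mul_of_nonneg_left hB hC0
    _ = (3/2) * (D/2) ^ (α-2) * ((r ^ (-(α/2)) * r) * (s ^ (-(α/2)) * s)) := by ring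
    _ = (3/2) * (D/2) ^ (α-2) * (r ^ (1-α/2) * s ^ (1-α/2)) := by
        rw [show (1-α/2) = (-(α/2))+1 by ring, Real.rpow_add_one (ne_of_gt hr),
          Real.rpow_add_one (ne_of_gt hs)]
    _ ≤ (3/2) * (4 * D ^ (α-2)) * (r ^ (1-α/2) * r ^ (1-α/2)) := by
        have hstep1 : r ^ (1-α/2) * s ^ (1-α/2) ≤ r ^ (1-α/2) * r ^ (1-α/2) :=
          mul_le_mul_of_nonneg_left e3 h1
        have h4D : (0:ℝ) ≤ 4 * D ^ (α-2) := by positivity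
        have h6 : (0:ℝ) ≤ r ^ (1-α/2) * s ^ (1-α/2) :=
          mul_nonneg h1 (Real.rpow_pos_of_pos hs _).le
        nlinarith [mul_le_mul e5 hstep1 h6 h4D]
    _ = 6 * r ^ (2-α) * D ^ (α-2) := by
        rw [show (2-α) = (1-α/2)+(1-α/2) by ring, Real.rpow_add hr]
        ring

theorem stmt5 {Ω : Type*} [MeasurableSpace Ω] (μ : Measure Ω) [IsProbabilityMeasure μ]
    (W : E2 → Ω → ℝ) (σ α : ℝ) (hα : α ∈ Set.Ioo (0:ℝ) 1) (hσ : 0 < σ)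
    (hmeas : ∀ x, Measurable (W x)) (hmem : ∀ x, MemLp (W x) 2 μ)
    (hmean : ∀ x, ∫ ω, W x ω ∂μ = 0)
    (hcov : ∀ x y, ∫ ω, W x ω * W y ω ∂μ
      = σ ^ 2 / 2 * (‖x‖ ^ α + ‖y‖ ^ α - ‖y - x‖ ^ α))
    (ε : ℝ) (hε : ε ∈ Set.Ioo (0:ℝ) (1/2)) :
    ∃ c d₀ : ℝ, 0 < c ∧ 0 < d₀ ∧
      ∀ x₁ x₂ x₃ x₄ : E2,
        0 < ‖x₄ - x₃‖ → ‖x₄ - x₃‖ ≤ ‖x₂ - x₁‖ → ‖x₂ - x₁‖ ≤ ‖x₃ - x₁‖ ^ ε →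
        d₀ ≤ ‖x₃ - x₁‖ →
        |(∫ ω, nInc σ α W x₁ x₂ ω * nInc σ α W x₃ x₄ ω ∂μ) /
            (Real.sqrt (∫ ω, (nInc σ α W x₁ x₂ ω) ^ 2 ∂μ) *
              Real.sqrt (∫ ω, (nInc σ α W x₃ x₄ ω) ^ 2 ∂μ))|
          ≤ c * ‖x₂ - x₁‖ ^ (2 - α) * ‖x₃ - x₁‖ ^ (α - 2) := by
  obtain ⟨hα0, hα1⟩ := hα
  obtain ⟨hε0, hε1⟩ := hε
  refine ⟨6, max 1 ((4:ℝ) ^ ((1:ℝ)/(1-ε))), by norm_num,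
    lt_of_lt_of_le zero_lt_one (le_max_left _ _), ?_⟩
  intro x₁ x₂ x₃ x₄ hs hsr hrD hD
  have hr : 0 < ‖x₂ - x₁‖ := lt_of_lt_of_le hs hsr
  have hD1 : (1:ℝ) ≤ ‖x₃ - x₁‖ := le_trans (le_max_left _ _) hD
  have hD0 : (0:ℝ) < ‖x₃ - x₁‖ := lt_of_lt_of_le zero_lt_one hD1
  -- geometric smallness: 4 * D ^ ε ≤ D
  have hquarter : 4 * ‖x₃ - x₁‖ ^ ε ≤ ‖x₃ - x₁‖ := by
    have h4 : (4:ℝ) ^ ((1:ℝ)/(1-ε)) ≤ ‖x₃ - x₁‖ := le_trans (le_max_right _ _) hD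
    have h4D : (4:ℝ) ≤ ‖x₃ - x₁‖ ^ (1-ε) := by
      calc (4:ℝ) = ((4:ℝ) ^ ((1:ℝ)/(1-ε))) ^ (1-ε) := by
            rw [← Real.rpow_mul (by norm_num : (0:ℝ) ≤ 4), one_div,
              inv_mul_cancel₀ (by linarith : (1:ℝ)-ε ≠ 0), Real.rpow_one]
        _ ≤ ‖x₃ - x₁‖ ^ (1-ε) := Real.rpow_le_rpow (by positivity) h4 (by linarith)
    calc 4 * ‖x₃ - x₁‖ ^ ε ≤ ‖x₃ - x₁‖ ^ (1-ε) * ‖x₃ - x₁‖ ^ ε :=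
          mul_le_mul_of_nonneg_right h4D (Real.rpow_pos_of_pos hD0 _).le
      _ = ‖x₃ - x₁‖ := by
          rw [← Real.rpow_add hD0]
          norm_num
  have hDε : (0:ℝ) < ‖x₃ - x₁‖ ^ ε := Real.rpow_pos_of_pos hD0 _
  have hm2 : 2 * ‖x₃ - x₁‖ ^ ε ≤ ‖x₃ - x₁‖ / 2 := by linarith
  have hDb2 : (0:ℝ) < ‖x₃ - x₁‖ / 2 := by linarith
  -- lower bounds on relevant norms along segments
  have hbound1 : ∀ t ∈ Set.Icc (0:ℝ) 1,
      ‖x₃ - x₁‖ / 2 ≤ ‖(x₃ - x₁) - (x₂ - x₁) + t • (x₄ - x₃)‖ := by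
    intro t ht
    have htk : ‖t • (x₄ - x₃)‖ ≤ ‖x₄ - x₃‖ := by
      rw [norm_smul, Real.norm_eq_abs, abs_of_nonneg ht.1]
      calc t * ‖x₄ - x₃‖ ≤ 1 * ‖x₄ - x₃‖ :=
            mul_le_mul_of_nonneg_right ht.2 (norm_nonneg _)
        _ = ‖x₄ - x₃‖ := one_mul _
    have hsum : ‖(x₂ - x₁) - t • (x₄ - x₃)‖ ≤ ‖x₂ - x₁‖ + ‖x₄ - x₃‖ :=
      le_trans (norm_sub_le _ _) (add_le_add le_rfl htk)
    have htri : ‖x₃ - x₁‖ ≤ ‖(x₃ - x₁) - (x₂ - x₁) + t • (x₄ - x₃)‖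
        + ‖(x₂ - x₁) - t • (x₄ - x₃)‖ := by
      have e : ((x₃ - x₁) - (x₂ - x₁) + t • (x₄ - x₃)) + ((x₂ - x₁) - t • (x₄ - x₃))
          = x₃ - x₁ := by abel
      calc ‖x₃ - x₁‖
          = ‖((x₃ - x₁) - (x₂ - x₁) + t • (x₄ - x₃)) + ((x₂ - x₁) - t • (x₄ - x₃))‖ := by
            rw [e]
        _ ≤ _ := norm_add_le _ _
    linarith
  have hbound2 : ∀ t ∈ Set.Icc (0:ℝ) 1,
      ‖x₃ - x₁‖ / 2 ≤ ‖(x₃ - x₁) + t • (x₄ - x₃)‖ := by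
    intro t ht
    have htk : ‖t • (x₄ - x₃)‖ ≤ ‖x₄ - x₃‖ := by
      rw [norm_smul, Real.norm_eq_abs, abs_of_nonneg ht.1]
      calc t * ‖x₄ - x₃‖ ≤ 1 * ‖x₄ - x₃‖ :=
            mul_le_mul_of_nonneg_right ht.2 (norm_nonneg _)
        _ = ‖x₄ - x₃‖ := one_mul _
    have htri : ‖x₃ - x₁‖ ≤ ‖(x₃ - x₁) + t • (x₄ - x₃)‖ + ‖t • (x₄ - x₃)‖ := by
      have e : ((x₃ - x₁) + t • (x₄ - x₃)) - t • (x₄ - x₃) = x₃ - x₁ := by abel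
      calc ‖x₃ - x₁‖ = ‖((x₃ - x₁) + t • (x₄ - x₃)) - t • (x₄ - x₃)‖ := by rw [e]
        _ ≤ _ := norm_sub_le _ _
    linarith
  -- bracket bound
  have hbr := bracket_bound hα0 hα1 hDb2 (x₃ - x₁) (x₂ - x₁) (x₄ - x₃) hbound1 hbound2
  have e1 : (x₃ - x₁) - (x₂ - x₁) = x₃ - x₂ := by abel
  have e2 : (x₃ - x₁) + (x₄ - x₃) = x₄ - x₁ := by abel
  have e3 : (x₃ - x₂) + (x₄ - x₃) = x₄ - x₂ := by abel
  rw [e1, e2, e3] at hbr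
  -- denominators are 1
  have hα0' : α ≠ 0 := ne_of_gt hα0
  have hden : ∀ x y : E2, 0 < ‖y - x‖ → ∫ ω, (nInc σ α W x y ω) ^ 2 ∂μ = 1 := by
    intro x y hxy
    have e : (fun ω => (nInc σ α W x y ω) ^ 2)
        = fun ω => (σ⁻¹ * ‖y - x‖ ^ (-(α/2))) ^ 2 * (W y ω - W x ω) ^ 2 := by
      funext ω
      rw [nInc]
      ring
    rw [e, integral_const_mul, var_incr W σ α hα0' hmem hcov x y, mul_pow]
    have h2 : (‖y - x‖ ^ (-(α/2))) ^ (2:ℕ) = ‖y - x‖ ^ (-α) := by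
      rw [← Real.rpow_natCast (‖y - x‖ ^ (-(α/2))) 2, ← Real.rpow_mul (norm_nonneg _)]
      congr 1
      push_cast
      ring
    rw [h2]
    calc σ⁻¹ ^ 2 * ‖y - x‖ ^ (-α) * (σ ^ 2 * ‖y - x‖ ^ α)
        = (σ⁻¹ ^ 2 * σ ^ 2) * (‖y - x‖ ^ (-α) * ‖y - x‖ ^ α) := by ring
      _ = 1 := by
          rw [← Real.rpow_add hxy, neg_add_cancel, Real.rpow_zero, inv_pow,
            inv_mul_cancel₀ (pow_ne_zero 2 (ne_of_gt hσ))]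
          norm_num
  rw [hden x₁ x₂ hr, hden x₃ x₄ hs, Real.sqrt_one, mul_one, div_one]
  -- numerator
  have hnum : ∫ ω, nInc σ α W x₁ x₂ ω * nInc σ α W x₃ x₄ ω ∂μ
      = σ⁻¹ * ‖x₂ - x₁‖ ^ (-(α/2)) * (σ⁻¹ * ‖x₄ - x₃‖ ^ (-(α/2)))
        * (σ ^ 2 / 2 * (‖x₄ - x₁‖ ^ α + ‖x₃ - x₂‖ ^ α - ‖x₄ - x₂‖ ^ α - ‖x₃ - x₁‖ ^ α)) := by
    have e : (fun ω => nInc σ α W x₁ x₂ ω * nInc σ α W x₃ x₄ ω)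
        = fun ω => σ⁻¹ * ‖x₂ - x₁‖ ^ (-(α/2)) * (σ⁻¹ * ‖x₄ - x₃‖ ^ (-(α/2)))
            * ((W x₂ ω - W x₁ ω) * (W x₄ ω - W x₃ ω)) := by
      funext ω
      rw [nInc, nInc]
      ring
    rw [e, integral_const_mul, cov_incr W σ α hmem hcov x₁ x₂ x₃ x₄]
  rw [hnum]
  -- final algebraic estimate
  have hBabs : |‖x₄ - x₁‖ ^ α + ‖x₃ - x₂‖ ^ α - ‖x₄ - x₂‖ ^ α - ‖x₃ - x₁‖ ^ α|
      ≤ 3 * (‖x₃ - x₁‖ / 2) ^ (α - 2) * ‖x₂ - x₁‖ * ‖x₄ - x₃‖ := by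
    have hre : ‖x₄ - x₁‖ ^ α + ‖x₃ - x₂‖ ^ α - ‖x₄ - x₂‖ ^ α - ‖x₃ - x₁‖ ^ α
        = ‖x₃ - x₂‖ ^ α + ‖x₄ - x₁‖ ^ α - ‖x₄ - x₂‖ ^ α - ‖x₃ - x₁‖ ^ α := by ring
    rw [hre]
    exact hbr
  exact final_algebra hσ hα0 hα1 hs hsr hD0 hBabs
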